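/- arXiv:2308.00420 — 4 statements merged into one kernel-verified Lean document; each statement's English description precedes it below -/
import Mathlib

section
/- Let X be a finite set with |X| = 3q and let C be a finite collection of 3-element subsets of X. Construct the directed graph G with vertex set {s, t} ∪ {v'_i : C_i ∈ C} ∪ {v_j : x_j ∈ X}, arcs (s, v'_i) for each C_i ∈ C with capacity 3, arcs (v'_i, v_j) whenever x_j ∈ C_i with capacity 1, and arcs (v_j, t) for each x_j ∈ X with capacity 1. Then there exists an integral s-t flow of value 3q respecting the capacities and using at most q of the arcs (s, v'_i) if and only if C contains an exact cover of X, i.e., a subcollection C̃ ⊆ C of pairwise disjoint sets whose union is X. -/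
open Finset

/-- An integral feasible flow in the reduction graph of an `ExactCoverBy3Sets` instance
with ground set `X` and collection `C` of subsets of `X`.  The graph has a source `s`,
a set vertex `v'_i` per set `C_i ∈ C`, an element vertex `v_j` per `x_j ∈ X`, and a sink
`t`; `fs c` is the flow on the arc `(s, v'_c)` (capacity 3), `fm c j` the flow on the arc
`(v'_c, v_j)` (capacity 1, existing iff `j ∈ c`), and `ft j` the flow on `(v_j, t)`
(capacity 1). Flow conservation holds at all interior vertices. -/
structure ReductionFlow {α : Type*} [DecidableEq α] (X : Finset α) (C : Finset (Finset α)) where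
  fs : Finset α → ℕ
  fm : Finset α → α → ℕ
  ft : α → ℕ
  fs_cap : ∀ c ∈ C, fs c ≤ 3
  fm_cap : ∀ c ∈ C, ∀ j ∈ X, fm c j ≤ 1
  fm_supp : ∀ c ∈ C, ∀ j, j ∉ c → fm c j = 0
  ft_cap : ∀ j ∈ X, ft j ≤ 1
  conservation_set : ∀ c ∈ C, fs c = ∑ j ∈ X, fm c j
  conservation_elem : ∀ j ∈ X, ft j = ∑ c ∈ C, fm c j

/-- The value of a flow in the reduction graph: total outflow of the source. -/
def ReductionFlow.value {α : Type*} [DecidableEq α] {X : Finset α} {C : Finset (Finset α)}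
    (F : ReductionFlow X C) : ℕ := ∑ c ∈ C, F.fs c

/-- The number of source arcs `(s, v'_i)` carrying positive flow. -/
def ReductionFlow.usedSourceArcs {α : Type*} [DecidableEq α] {X : Finset α}
    {C : Finset (Finset α)} (F : ReductionFlow X C) : Finset (Finset α) :=
  C.filter fun c => 0 < F.fs c

/-- `D` is an exact cover of `X`: a collection of pairwise disjoint sets whose union is `X`. -/
def IsExactCover {α : Type*} [DecidableEq α] (X : Finset α) (D : Finset (Finset α)) : Prop :=
  (∀ a ∈ D, ∀ b ∈ D, a ≠ b → Disjoint a b) ∧ D.sup id = X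

/-- There is an integral feasible `s`-`t` flow of value `3q` in the reduction graph
using at most `q` of the arcs `(s, v'_i)` iff the `ExactCoverBy3Sets` instance is a
yes-instance. -/
theorem flow_iff_exactCover {α : Type*} [DecidableEq α] (q : ℕ)
    (X : Finset α) (C : Finset (Finset α))
    (hX : X.card = 3 * q) (hC : ∀ c ∈ C, c.card = 3 ∧ c ⊆ X) :
    (∃ F : ReductionFlow X C, F.value = 3 * q ∧ F.usedSourceArcs.card ≤ q) ↔
      (∃ D ⊆ C, IsExactCover X D) := by
  constructor
  · rintro ⟨F, hval, hused⟩
    set D := F.usedSourceArcs with hDdef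
    have hDC : D ⊆ C := filter_subset _ _
    -- flow only on used arcs
    have hzero : ∀ c ∈ C, c ∉ D → F.fs c = 0 := by
      intro c hc hcD
      by_contra h
      exact hcD (mem_filter.mpr ⟨hc, Nat.pos_of_ne_zero h⟩)
    have hsumD : ∑ c ∈ D, F.fs c = 3 * q := by
      rw [← hval, ReductionFlow.value]
      exact Finset.sum_subset hDC (fun c hc hcD => hzero c hc hcD)
    -- fs c = 3 for c ∈ D
    have hle : ∑ c ∈ D, F.fs c ≤ ∑ c ∈ D, 3 :=
      Finset.sum_le_sum fun c hc => F.fs_cap c (hDC hc)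
    have hge : 3 * q ≤ 3 * D.card := by
      calc 3 * q = ∑ c ∈ D, F.fs c := hsumD.symm
        _ ≤ ∑ c ∈ D, 3 := hle
        _ = 3 * D.card := by rw [Finset.sum_const, smul_eq_mul, mul_comm]
    have hcard : D.card = q := le_antisymm hused (by omega)
    have hsum_eq : ∑ c ∈ D, F.fs c = ∑ c ∈ D, 3 := by
      rw [hsumD, Finset.sum_const, smul_eq_mul, hcard, mul_comm]
    have hfs3 : ∀ c ∈ D, F.fs c = 3 :=
      (Finset.sum_eq_sum_iff_of_le (fun c hc => F.fs_cap c (hDC hc))).mp hsum_eq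
    -- fm c j = 1 for c ∈ D, j ∈ c
    have hfm1 : ∀ c ∈ D, ∀ j ∈ c, F.fm c j = 1 := by
      intro c hcD j hj
      have hcC := hDC hcD
      obtain ⟨hc3, hcX⟩ := hC c hcC
      have hrestr : ∑ j ∈ X, F.fm c j = ∑ j ∈ c, F.fm c j :=
        (Finset.sum_subset hcX (fun j _ hjc => F.fm_supp c hcC j hjc)).symm
      have hsum3 : ∑ j ∈ c, F.fm c j = 3 := by
        rw [← hrestr, ← F.conservation_set c hcC, hfs3 c hcD]
      have hsum_eq' : ∑ j ∈ c, F.fm c j = ∑ j ∈ c, 1 := by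
        rw [hsum3, Finset.sum_const, smul_eq_mul, hc3, mul_one]
      exact (Finset.sum_eq_sum_iff_of_le
        (fun j hjc => F.fm_cap c hcC j (hcX hjc))).mp hsum_eq' j hj
    -- ft j = 1 for all j ∈ X
    have hft1 : ∀ j ∈ X, F.ft j = 1 := by
      have htot : ∑ j ∈ X, F.ft j = 3 * q := by
        calc ∑ j ∈ X, F.ft j = ∑ j ∈ X, ∑ c ∈ C, F.fm c j :=
              Finset.sum_congr rfl fun j hj => F.conservation_elem j hj
          _ = ∑ c ∈ C, ∑ j ∈ X, F.fm c j := Finset.sum_comm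
          _ = ∑ c ∈ C, F.fs c :=
              Finset.sum_congr rfl fun c hc => (F.conservation_set c hc).symm
          _ = 3 * q := hval
      have hsum_eq'' : ∑ j ∈ X, F.ft j = ∑ j ∈ X, 1 := by
        rw [htot, Finset.sum_const, smul_eq_mul, hX, mul_one]
      exact (Finset.sum_eq_sum_iff_of_le (fun j hj => F.ft_cap j hj)).mp hsum_eq''
    refine ⟨D, hDC, ?_, ?_⟩
    · -- pairwise disjoint
      intro a ha b hb hab
      rw [Finset.disjoint_left]
      intro j hja hjb
      have hjX : j ∈ X := ((hC a (hDC ha)).2) hja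
      have h2 : (2 : ℕ) ≤ ∑ c ∈ C, F.fm c j := by
        have hsub : ({a, b} : Finset (Finset α)) ⊆ C := by
          intro c hc
          rcases Finset.mem_insert.mp hc with rfl | hc
          · exact hDC ha
          · exact hDC (Finset.mem_singleton.mp hc ▸ hb)
        calc (2 : ℕ) = ∑ c ∈ ({a, b} : Finset (Finset α)), F.fm c j := by
              rw [Finset.sum_pair hab, hfm1 a ha j hja, hfm1 b hb j hjb]
          _ ≤ ∑ c ∈ C, F.fm c j :=
              Finset.sum_le_sum_of_subset hsub
      rw [← F.conservation_elem j hjX, hft1 j hjX] at h2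
      omega
    · -- union is X
      apply le_antisymm
      · apply Finset.sup_le
        intro c hc
        exact (hC c (hDC hc)).2
      · intro j hjX
        have h1 : (1 : ℕ) = ∑ c ∈ C, F.fm c j := by
          rw [← F.conservation_elem j hjX, hft1 j hjX]
        have : ∃ c ∈ C, 0 < F.fm c j := by
          by_contra h
          push_neg at h
          have : ∑ c ∈ C, F.fm c j = 0 :=
            Finset.sum_eq_zero fun c hc => Nat.le_zero.mp (h c hc)
          omega
        obtain ⟨c, hcC, hpos⟩ := this
        have hjc : j ∈ c := by
          by_contra h
          rw [F.fm_supp c hcC j h] at hpos; omega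
        have hcD : c ∈ D := by
          refine mem_filter.mpr ⟨hcC, ?_⟩
          rw [F.conservation_set c hcC]
          calc 0 < F.fm c j := hpos
            _ ≤ ∑ j' ∈ X, F.fm c j' := Finset.single_le_sum (fun _ _ => Nat.zero_le _) hjX
        exact Finset.le_sup (f := id) hcD hjc
  · rintro ⟨D, hDC, hdisj, hsup⟩
    classical
    -- |D| = q
    have hbiUnion : D.sup id = D.biUnion id := by
      rw [Finset.sup_eq_biUnion]
    have hcardX : X.card = ∑ c ∈ D, c.card := by
      rw [← hsup, hbiUnion]
      exact Finset.card_biUnion (fun a ha b hb hab => hdisj a ha b hb hab)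
    have hDq : D.card = q := by
      have : ∑ c ∈ D, c.card = ∑ c ∈ D, 3 :=
        Finset.sum_congr rfl fun c hc => (hC c (hDC hc)).1
      rw [this, Finset.sum_const, smul_eq_mul] at hcardX
      omega
    -- for each j ∈ X there is exactly one set of D containing j
    have hone : ∀ j ∈ X, ∃ c₀ ∈ D, (D.filter fun c => j ∈ c) = {c₀} := by
      intro j hjX
      have : j ∈ D.sup id := hsup ▸ hjX
      obtain ⟨c₀, hc₀D, hjc₀⟩ := Finset.mem_sup.mp this
      refine ⟨c₀, hc₀D, ?_⟩
      ext c
      simp only [Finset.mem_filter, Finset.mem_singleton]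
      constructor
      · rintro ⟨hcD, hjc⟩
        by_contra hne
        exact (Finset.disjoint_left.mp (hdisj c hcD c₀ hc₀D hne) hjc) hjc₀
      · rintro rfl
        exact ⟨hc₀D, hjc₀⟩
    -- the flow
    refine ⟨⟨fun c => if c ∈ D then 3 else 0,
            fun c j => if c ∈ D ∧ j ∈ c then 1 else 0,
            fun j => if j ∈ X then 1 else 0, ?_, ?_, ?_, ?_, ?_, ?_⟩, ?_, ?_⟩
    · intro c _; split <;> omega
    · intro c _ j _; split <;> omega
    · intro c _ j hj
      simp [hj]
    · intro j _; split <;> omega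
    · -- conservation at set vertices
      intro c hcC
      by_cases hcD : c ∈ D
      · have hcX : c ⊆ X := (hC c hcC).2
        have : ∑ j ∈ X, (if c ∈ D ∧ j ∈ c then 1 else 0)
            = ∑ j ∈ X, (if j ∈ c then 1 else 0) := by
          apply Finset.sum_congr rfl
          intro j _
          simp [hcD]
        rw [this, Finset.sum_ite_mem, Finset.inter_eq_right.mpr hcX,
          Finset.sum_const, smul_eq_mul, (hC c hcC).1]
        simp [hcD]
      · have : ∑ j ∈ X, (if c ∈ D ∧ j ∈ c then 1 else 0) = 0 := by
          apply Finset.sum_eq_zero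
          intro j _
          simp [hcD]
        rw [this]
        simp [hcD]
    · -- conservation at element vertices
      intro j hjX
      obtain ⟨c₀, hc₀D, hfilt⟩ := hone j hjX
      have hfeq : C.filter (fun c => c ∈ D ∧ j ∈ c) = D.filter (fun c => j ∈ c) := by
        ext c
        simp only [Finset.mem_filter]
        exact ⟨fun ⟨_, h⟩ => h, fun ⟨h1, h2⟩ => ⟨hDC h1, h1, h2⟩⟩
      rw [Finset.sum_ite, Finset.sum_const, Finset.sum_const, smul_eq_mul, smul_eq_mul,
        mul_zero, add_zero, mul_one, hfeq, hfilt]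
      simp [hjX]
    · -- value
      show ∑ c ∈ C, (if c ∈ D then 3 else 0) = 3 * q
      rw [Finset.sum_ite_mem, Finset.inter_eq_right.mpr hDC, Finset.sum_const,
        smul_eq_mul, hDq, mul_comm]
    · -- used source arcs
      have : (C.filter fun c => 0 < if c ∈ D then 3 else 0) = D := by
        ext c
        simp only [Finset.mem_filter]
        constructor
        · rintro ⟨hcC, hpos⟩
          by_contra h
          simp [h] at hpos
        · intro h
          exact ⟨hDC h, by simp [h]⟩
      show (C.filter fun c => 0 < if c ∈ D then 3 else 0).card ≤ q
      rw [this, hDq]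
end

section
/- In the reduction graph from an ExactCoverBy3Sets instance (source s, set vertices v'_i with arcs (s,v'_i) of capacity 3, arcs (v'_i,v_j) of capacity 1 for x_j ∈ C_i, arcs (v_j,t) of capacity 1), any integral feasible s-t flow of value 3q must have flow exactly 3 on each arc (s, v'_i) that carries positive flow, and hence uses exactly q of the arcs (s, v'_i). Consequently each element vertex v_j is reached by exactly one unit of flow. -/
open Finset

lemma sum_bounded_eq {β : Type*} {s : Finset β} {f : β → ℕ} {n k : ℕ} (hn : 0 < n)
    (h : ∀ i ∈ s, f i ≤ n) (hc : s.card ≤ k) (hs : ∑ i ∈ s, f i = n * k) :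
    (∀ i ∈ s, f i = n) ∧ s.card = k := by
  have hle : ∑ i ∈ s, f i ≤ n * s.card := by
    calc ∑ i ∈ s, f i ≤ ∑ _i ∈ s, n := Finset.sum_le_sum h
    _ = n * s.card := by rw [Finset.sum_const, smul_eq_mul, mul_comm]
  have hcard : s.card = k := by
    have h1 : n * k ≤ n * s.card := hs ▸ hle
    have h2 : k ≤ s.card := le_of_mul_le_mul_left h1 hn
    omega
  refine ⟨fun i hi => ?_, hcard⟩
  by_contra hne
  have hlt : f i < n := lt_of_le_of_ne (h i hi) hne
  have : ∑ j ∈ s, f j < ∑ _j ∈ s, n :=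
    Finset.sum_lt_sum h ⟨i, hi, hlt⟩
  rw [Finset.sum_const, smul_eq_mul, mul_comm, hs, hcard] at this
  omega

/-- Any integral feasible flow of value `3q` in the reduction graph that uses at most
`q` of the arcs `(s, v'_i)` must send exactly 3 units on every used source arc, hence
uses exactly `q` such arcs, and every element vertex receives exactly one unit of flow. -/
theorem flow_structure {α : Type*} [DecidableEq α] (q : ℕ)
    (X : Finset α) (C : Finset (Finset α))
    (hX : X.card = 3 * q) (hC : ∀ c ∈ C, c.card = 3 ∧ c ⊆ X)
    (F : ReductionFlow X C) (hval : F.value = 3 * q)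
    (hused : F.usedSourceArcs.card ≤ q) :
    (∀ c ∈ C, 0 < F.fs c → F.fs c = 3) ∧
      F.usedSourceArcs.card = q ∧
      (∀ j ∈ X, F.ft j = 1) := by
  have hsub : F.usedSourceArcs ⊆ C := Finset.filter_subset _ _
  have hsum_used : ∑ c ∈ F.usedSourceArcs, F.fs c = 3 * q := by
    rw [← hval, ReductionFlow.value]
    exact Finset.sum_subset hsub (fun c hc' hc'' => by
      simp only [ReductionFlow.usedSourceArcs, Finset.mem_filter, not_and, not_lt] at hc''
      have := hc'' hc'; omega)
  obtain ⟨h3, hcard⟩ := sum_bounded_eq (by norm_num)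
    (fun c hc' => F.fs_cap c (hsub hc')) hused hsum_used
  refine ⟨fun c hc' hpos => h3 c (Finset.mem_filter.mpr ⟨hc', hpos⟩), hcard, ?_⟩
  have hsumt : ∑ j ∈ X, F.ft j = 1 * X.card := by
    calc ∑ j ∈ X, F.ft j = ∑ j ∈ X, ∑ c ∈ C, F.fm c j :=
          Finset.sum_congr rfl (fun j hj => F.conservation_elem j hj)
    _ = ∑ c ∈ C, ∑ j ∈ X, F.fm c j := Finset.sum_comm
    _ = ∑ c ∈ C, F.fs c := Finset.sum_congr rfl (fun c hc' => (F.conservation_set c hc').symm)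
    _ = 1 * X.card := by rw [← ReductionFlow.value, hval, hX, one_mul]
  exact (sum_bounded_eq one_pos F.ft_cap le_rfl hsumt).1
end

section
/- If C̃ ⊆ C is an exact cover of X by 3-sets (|X| = 3q, the sets in C̃ are pairwise disjoint and cover X), then in the reduction graph the flow that sends 3 units on each arc (s, v'_i) with C_i ∈ C̃, 1 unit on each arc (v'_i, v_j) with C_i ∈ C̃ and x_j ∈ C_i, and 1 unit on each arc (v_j, t), is a feasible integral s-t flow of value 3q that uses exactly q = |C̃| of the arcs (s, v'_i). -/
open Finset

/-- If `D ⊆ C` is an exact cover of `X` by 3-sets, then sending 3 units on each arc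
`(s, v'_i)` with `C_i ∈ D`, 1 unit on each arc `(v'_i, v_j)` with `C_i ∈ D` and
`x_j ∈ C_i`, and 1 unit on each arc `(v_j, t)`, is a feasible integral `s`-`t` flow of
value `3q` that uses exactly `q = |D|` of the arcs `(s, v'_i)`. -/
theorem exactCover_gives_flow {α : Type*} [DecidableEq α] (q : ℕ)
    (X : Finset α) (C : Finset (Finset α))
    (hX : X.card = 3 * q) (hC : ∀ c ∈ C, c.card = 3 ∧ c ⊆ X)
    (D : Finset (Finset α)) (hD : D ⊆ C) (hcover : IsExactCover X D) :
    ∃ F : ReductionFlow X C,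
      (∀ c, F.fs c = if c ∈ D then 3 else 0) ∧
      (∀ c j, F.fm c j = if c ∈ D ∧ j ∈ c then 1 else 0) ∧
      (∀ j, F.ft j = if j ∈ X then 1 else 0) ∧
      F.value = 3 * q ∧
      F.usedSourceArcs.card = D.card ∧ D.card = q := by
  classical
  obtain ⟨hdisj, hsup⟩ := hcover
  -- each j ∈ X lies in exactly one member of D
  have huniq : ∀ j ∈ X, (D.filter fun c => j ∈ c).card = 1 := by
    intro j hj
    rw [← hsup, Finset.mem_sup] at hj
    obtain ⟨c, hcD, hjc⟩ := hj
    rw [Finset.card_eq_one]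
    refine ⟨c, ?_⟩
    ext d
    simp only [Finset.mem_filter, Finset.mem_singleton]
    constructor
    · rintro ⟨hdD, hjd⟩
      by_contra hne
      have hjc' : j ∈ c := hjc
      have := (hdisj d hdD c hcD hne).le_bot (by simp [hjd, hjc'] : j ∈ d ⊓ c)
      simp at this
    · rintro rfl; exact ⟨hcD, hjc⟩
  have hcardD : D.card = q := by
    have hbu : D.sup id = D.biUnion id := Finset.sup_eq_biUnion D id
    have hdisj' : ∀ a ∈ D, ∀ b ∈ D, a ≠ b → Disjoint (id a) (id b) := hdisj
    have := Finset.card_biUnion hdisj'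
    rw [← hbu, hsup, hX] at this
    have hsum : ∑ c ∈ D, (id c).card = ∑ c ∈ D, 3 :=
      Finset.sum_congr rfl fun c hc => (hC c (hD hc)).1
    rw [hsum, Finset.sum_const, smul_eq_mul] at this
    omega
  refine ⟨⟨fun c => if c ∈ D then 3 else 0,
      fun c j => if c ∈ D ∧ j ∈ c then 1 else 0,
      fun j => if j ∈ X then 1 else 0,
      fun c _ => by by_cases h : c ∈ D <;> simp [h],
      fun c _ j _ => by by_cases h : c ∈ D ∧ j ∈ c <;> simp [h],
      fun c _ j hj => by simp [hj],
      fun j hj => by simp [hj],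
      ?_, ?_⟩, fun c => rfl, fun c j => rfl, fun j => rfl, ?_, ?_, hcardD⟩
  · intro c hc
    by_cases hcD : c ∈ D
    · have hsub : c ⊆ X := (hC c hc).2
      have : ∑ j ∈ X, (if c ∈ D ∧ j ∈ c then 1 else 0) = (X.filter fun j => j ∈ c).card := by
        rw [Finset.card_filter]
        exact Finset.sum_congr rfl fun j _ => by simp [hcD]
      have hfe : X.filter (fun j => j ∈ c) = c := by
        ext j; simp only [Finset.mem_filter]
        exact ⟨fun h => h.2, fun h => ⟨hsub h, h⟩⟩
      show (if c ∈ D then 3 else 0) = _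
      rw [if_pos hcD, this, hfe, (hC c hc).1]
    · simp [hcD]
  · intro j hj
    have : ∑ c ∈ C, (if c ∈ D ∧ j ∈ c then 1 else 0)
        = (D.filter fun c => j ∈ c).card := by
      rw [Finset.card_filter, ← Finset.sum_subset hD (fun c _ hc => by simp [hc])]
      exact Finset.sum_congr rfl fun c hc => by simp [hc]
    simp [hj, this, huniq j hj]
  · -- value
    show (∑ c ∈ C, if c ∈ D then 3 else 0) = 3 * q
    rw [Finset.sum_ite_mem, Finset.inter_eq_right.mpr hD, Finset.sum_const,
      smul_eq_mul, hcardD, mul_comm]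
  · -- usedSourceArcs
    show (C.filter fun c => 0 < if c ∈ D then 3 else 0).card = D.card
    congr 1
    ext c
    simp only [Finset.mem_filter]
    constructor
    · rintro ⟨_, h⟩; by_contra hcD; simp [hcD] at h
    · intro h; exact ⟨hD h, by simp [h]⟩
end

section
/- If an integral s-t flow of value 3q in the ExactCoverBy3Sets reduction graph uses at most q of the arcs (s, v'_i), then the collection C̃ := { C_i : the arc (s, v'_i) carries positive flow } is an exact cover of X, i.e., its members are pairwise disjoint and their union is X. -/
open Finset

/-- If an integral feasible flow of value `3q` in the reduction graph uses at most `q`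
of the arcs `(s, v'_i)`, then the collection of sets whose source arc carries positive
flow is an exact cover of `X`. -/
theorem flow_gives_exactCover {α : Type*} [DecidableEq α] (q : ℕ)
    (X : Finset α) (C : Finset (Finset α))
    (hX : X.card = 3 * q) (hC : ∀ c ∈ C, c.card = 3 ∧ c ⊆ X)
    (F : ReductionFlow X C) (hval : F.value = 3 * q)
    (hused : F.usedSourceArcs.card ≤ q) :
    IsExactCover X F.usedSourceArcs := by

  classical
  set U := F.usedSourceArcs with hU
  have hUsub : U ⊆ C := Finset.filter_subset _ _
  -- sum over used arcs equals 3q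
  have hsumU : ∑ c ∈ U, F.fs c = 3 * q := by
    rw [← hval]
    unfold ReductionFlow.value
    apply Finset.sum_subset hUsub
    intro c hc hcU
    simp only [hU, ReductionFlow.usedSourceArcs, Finset.mem_filter, not_and, not_lt] at hcU
    have := hcU hc
    omega
  -- each used arc carries flow 3
  have h3 : ∀ c ∈ U, F.fs c = 3 := by
    have hle : ∑ c ∈ U, F.fs c ≤ ∑ c ∈ U, 3 := by
      apply Finset.sum_le_sum
      intro c hc; exact F.fs_cap c (hUsub hc)
    have h33 : ∑ c ∈ U, (3:ℕ) = 3 * U.card := by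
      rw [Finset.sum_const]; ring
    have heq : ∑ c ∈ U, F.fs c = ∑ c ∈ U, 3 := by omega
    intro c hc
    have := (Finset.sum_eq_sum_iff_of_le (fun c hc => F.fs_cap c (hUsub hc))).mp heq c hc
    omega
  -- each middle arc from a used set is saturated
  have hfm1 : ∀ c ∈ U, ∀ j ∈ c, F.fm c j = 1 := by
    intro c hc
    have hcC := hUsub hc
    obtain ⟨hcard, hsub⟩ := hC c hcC
    have hcons := F.conservation_set c hcC
    have hsum : ∑ j ∈ c, F.fm c j = 3 := by
      have : ∑ j ∈ X, F.fm c j = ∑ j ∈ c, F.fm c j := by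
        symm
        apply Finset.sum_subset hsub
        intro j hj hjc; exact F.fm_supp c hcC j hjc
      rw [← this, ← hcons, h3 c hc]
    have hle : ∀ j ∈ c, F.fm c j ≤ 1 := fun j hj => F.fm_cap c hcC j (hsub hj)
    have hsum1 : ∑ j ∈ c, (1:ℕ) = 3 := by rw [Finset.sum_const, hcard]; ring
    have heq : ∑ j ∈ c, F.fm c j = ∑ j ∈ c, 1 := by omega
    exact fun j hj => (Finset.sum_eq_sum_iff_of_le hle).mp heq j hj
  -- each element receives total flow exactly 1
  have hone : ∀ j ∈ X, ∑ c ∈ C, F.fm c j = 1 := by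
    have htot : ∑ j ∈ X, F.ft j = 3 * q := by
      have : ∑ j ∈ X, F.ft j = ∑ j ∈ X, ∑ c ∈ C, F.fm c j := by
        apply Finset.sum_congr rfl
        intro j hj; exact F.conservation_elem j hj
      rw [this, Finset.sum_comm]
      rw [← hval]
      unfold ReductionFlow.value
      apply Finset.sum_congr rfl
      intro c hc; exact (F.conservation_set c hc).symm
    have hle : ∀ j ∈ X, F.ft j ≤ 1 := F.ft_cap
    have hsum1 : ∑ j ∈ X, (1:ℕ) = 3 * q := by rw [Finset.sum_const, hX]; ring
    have heq : ∑ j ∈ X, F.ft j = ∑ j ∈ X, 1 := by omega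
    intro j hj
    have := (Finset.sum_eq_sum_iff_of_le hle).mp heq j hj
    rw [← F.conservation_elem j hj, this]
  constructor
  · -- pairwise disjoint
    intro a ha b hb hab
    rw [Finset.disjoint_left]
    intro j hja hjb
    have haC := hUsub ha
    have hjX : j ∈ X := (hC a haC).2 hja
    have h1 : F.fm a j = 1 := hfm1 a ha j hja
    have h2 : F.fm b j = 1 := hfm1 b hb j hjb
    have hpair : ({a, b} : Finset (Finset α)) ⊆ C := by
      intro x hx
      simp only [Finset.mem_insert, Finset.mem_singleton] at hx
      rcases hx with rfl | rfl
      · exact haC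
      · exact hUsub hb
    have hge : 2 ≤ ∑ c ∈ C, F.fm c j := by
      calc 2 = ∑ c ∈ ({a, b} : Finset (Finset α)), F.fm c j := by
              rw [Finset.sum_pair hab, h1, h2]
           _ ≤ ∑ c ∈ C, F.fm c j := Finset.sum_le_sum_of_subset hpair
    rw [hone j hjX] at hge
    omega
  · -- union is X
    apply Finset.Subset.antisymm
    · intro j hj
      rw [Finset.mem_sup] at hj
      obtain ⟨c, hc, hjc⟩ := hj
      exact (hC c (hUsub hc)).2 hjc
    · intro j hj
      have h1 := hone j hj
      have : ∃ c ∈ C, 0 < F.fm c j := by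
        by_contra h
        push_neg at h
        have : ∑ c ∈ C, F.fm c j = 0 := Finset.sum_eq_zero (fun c hc => by have := h c hc; omega)
        omega
      obtain ⟨c, hcC, hpos⟩ := this
      have hjc : j ∈ c := by
        by_contra hjc
        rw [F.fm_supp c hcC j hjc] at hpos; omega
      have hfs : 0 < F.fs c := by
        rw [F.conservation_set c hcC]
        calc 0 < F.fm c j := hpos
             _ ≤ ∑ j' ∈ X, F.fm c j' := Finset.single_le_sum (fun _ _ => Nat.zero_le _) hj
      rw [Finset.mem_sup]
      exact ⟨c, Finset.mem_filter.mpr ⟨hcC, hfs⟩, hjc⟩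
end
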